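/- arXiv:1311.6367 — 2 statements merged into one kernel-verified Lean document; each statement's English description precedes it below -/
import Mathlib

section
/- Let (P_μ)_{μ∈𝒫(E)} be a nonlinear Markov transition kernel family on a measurable space (E,ℰ) satisfying the global nonlinear Dobrushin condition with constant α ∈ (0,1] and the measure-Lipschitz condition with constant λ ≥ 0. Then for all probability measures μ, ν ∈ 𝒫(E), d_TV(P_μ μ, P_ν ν) ≤ (1 − α + λ) d_TV(μ,ν) − (λ/2) d_TV(μ,ν)². -/
/-!
Split `μ = γ₁ + η`, `ν = γ₂ + η` along a Hahn decomposition of `μ - ν`, so that `η` is the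
common part, `γ₁` and `γ₂` both have mass `D = d_TV(μ,ν)/2`, and `η` has mass `1 - D`.
For a measurable `A`, `P_μ μ (A) - P_ν ν (A)` is then
`(∫ P_μ(·,A) dγ₁ - ∫ P_ν(·,A) dγ₂) + ∫ (P_μ(·,A) - P_ν(·,A)) dη`.
Since `γ₁` and `γ₂` have the same mass, the Dobrushin condition bounds the first term by
`(1 - α) D`; the measure-Lipschitz condition bounds the integrand of the second by `λ D`,
hence the term by `λ D (1 - D)`. Doubling `(1 - α) D + λ D (1 - D)` gives the claim.
-/

open MeasureTheory ProbabilityTheory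

/-- Total variation distance: `d_TV(μ,ν) = 2 ⨆_{A measurable} |μ(A) − ν(A)|`. -/
noncomputable def dTV {E : Type*} [MeasurableSpace E] (μ ν : Measure E) : ℝ :=
  2 * ⨆ A : {A : Set E // MeasurableSet A}, |(μ A.1).toReal - (ν A.1).toReal|

open Set

section TotalVariation

variable {E : Type*} [MeasurableSpace E]

lemma abs_real_sub_le_half_dTV (μ ν : Measure E) [IsFiniteMeasure μ] [IsFiniteMeasure ν]
    {A : Set E} (hA : MeasurableSet A) : |μ.real A - ν.real A| ≤ dTV μ ν / 2 := by
  have hbdd : BddAbove (range fun B : {B : Set E // MeasurableSet B} =>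
      |(μ B.1).toReal - (ν B.1).toReal|) := by
    refine ⟨μ.real univ + ν.real univ, ?_⟩
    rintro _ ⟨B, rfl⟩
    have hμB : μ.real B.1 ≤ μ.real univ := measureReal_mono (subset_univ _)
    have hνB : ν.real B.1 ≤ ν.real univ := measureReal_mono (subset_univ _)
    refine (abs_sub _ _).trans ?_
    rw [abs_of_nonneg ENNReal.toReal_nonneg, abs_of_nonneg ENNReal.toReal_nonneg]
    exact add_le_add hμB hνB
  have := le_ciSup hbdd ⟨A, hA⟩
  simp only [dTV, measureReal_def] at this ⊢
  linarith

lemma dTV_le_of_forall_abs_real_sub_le {μ ν : Measure E} {c : ℝ}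
    (h : ∀ A, MeasurableSet A → |μ.real A - ν.real A| ≤ c) : dTV μ ν ≤ 2 * c := by
  have : Nonempty {A : Set E // MeasurableSet A} := ⟨⟨∅, .empty⟩⟩
  exact mul_le_mul_of_nonneg_left (ciSup_le fun A => h A.1 A.2) zero_le_two

lemma dTV_comm (μ ν : Measure E) : dTV μ ν = dTV ν μ := by
  simp only [dTV, abs_sub_comm]

end TotalVariation

section CommonPart

variable {E : Type*} [MeasurableSpace E]

lemma exists_eq_add_common_part (μ ν : Measure E) [IsFiniteMeasure μ] [IsFiniteMeasure ν] :
    ∃ (S : Set E) (γ₁ γ₂ η : Measure E), MeasurableSet S ∧ μ = γ₁ + η ∧ ν = γ₂ + η ∧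
      γ₁ Sᶜ = 0 ∧ γ₂ S = 0 := by
  obtain ⟨S, hS, hνμ, hμν⟩ := hahn_decomposition μ ν
  have hle₁ : ν.restrict S ≤ μ.restrict S := by
    refine Measure.le_iff.mpr fun t ht => ?_
    rw [Measure.restrict_apply ht, Measure.restrict_apply ht]
    exact hνμ _ (ht.inter hS) inter_subset_right
  have hle₂ : μ.restrict Sᶜ ≤ ν.restrict Sᶜ := by
    refine Measure.le_iff.mpr fun t ht => ?_
    rw [Measure.restrict_apply ht, Measure.restrict_apply ht]
    exact hμν _ (ht.inter hS.compl) inter_subset_right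
  refine ⟨S, μ.restrict S - ν.restrict S, ν.restrict Sᶜ - μ.restrict Sᶜ,
    ν.restrict S + μ.restrict Sᶜ, hS, ?_, ?_, ?_, ?_⟩
  · rw [← add_assoc, Measure.sub_add_cancel_of_le hle₁, Measure.restrict_add_restrict_compl hS]
  · rw [add_comm (ν.restrict S), ← add_assoc, Measure.sub_add_cancel_of_le hle₂, add_comm,
      Measure.restrict_add_restrict_compl hS]
  · refine nonpos_iff_eq_zero.mp <| (Measure.sub_le Sᶜ).trans_eq ?_
    rw [Measure.restrict_apply hS.compl, compl_inter_self, measure_empty]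
  · refine nonpos_iff_eq_zero.mp <| (Measure.sub_le S).trans_eq ?_
    rw [Measure.restrict_apply hS, inter_compl_self, measure_empty]

lemma exists_common_part_real_univ_eq_half_dTV (μ ν : Measure E) [IsProbabilityMeasure μ]
    [IsProbabilityMeasure ν] :
    ∃ γ₁ γ₂ η : Measure E, μ = γ₁ + η ∧ ν = γ₂ + η ∧
      γ₁.real univ = dTV μ ν / 2 ∧ γ₂.real univ = dTV μ ν / 2 := by
  obtain ⟨S, γ₁, γ₂, η, hS, rfl, rfl, h₁, h₂⟩ := exists_eq_add_common_part μ ν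
  have := isFiniteMeasure_of_le _ (Measure.le_add_right (ν' := η) le_rfl : γ₁ ≤ γ₁ + η)
  have := isFiniteMeasure_of_le _ (Measure.le_add_right (ν' := η) le_rfl : γ₂ ≤ γ₂ + η)
  have := isFiniteMeasure_of_le _ (Measure.le_add_left (ν' := γ₁) le_rfl : η ≤ γ₁ + η)
  have hmass : γ₂.real univ = γ₁.real univ := by
    have h₁ := probReal_univ (μ := γ₁ + η)
    have h₂ := probReal_univ (μ := γ₂ + η)
    rw [measureReal_add_apply] at h₁ h₂
    linarith
  have hdiff : ∀ B, (γ₁ + η).real B - (γ₂ + η).real B = γ₁.real B - γ₂.real B := fun B => by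
    rw [measureReal_add_apply, measureReal_add_apply]; ring
  have hdTV : dTV (γ₁ + η) (γ₂ + η) = 2 * γ₁.real univ := by
    refine le_antisymm (dTV_le_of_forall_abs_real_sub_le fun B _ => ?_) ?_
    · have := measureReal_mono (μ := γ₁) (subset_univ B)
      have := measureReal_mono (μ := γ₂) (subset_univ B)
      rw [hdiff, abs_sub_le_iff]
      constructor <;> linarith [measureReal_nonneg (μ := γ₁) (s := B),
        measureReal_nonneg (μ := γ₂) (s := B)]
    · have hS₁ : γ₁.real S = γ₁.real univ := by
        rw [← measureReal_add_measureReal_compl hS]; simp [Measure.real, h₁]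
      have := abs_real_sub_le_half_dTV (γ₁ + η) (γ₂ + η) hS
      rw [hdiff, hS₁, measureReal_def γ₂, h₂, ENNReal.toReal_zero, sub_zero,
        abs_of_nonneg measureReal_nonneg] at this
      linarith
  exact ⟨γ₁, γ₂, η, rfl, rfl, by rw [hdTV]; ring, by rw [hdTV, hmass]; ring⟩

end CommonPart

lemma integral_sub_integral_le_of_forall_sub_le {X Y : Type*} [MeasurableSpace X]
    [MeasurableSpace Y] {γ₁ : Measure X} {γ₂ : Measure Y} [IsFiniteMeasure γ₁]
    [IsFiniteMeasure γ₂] (hmass : γ₁.real univ = γ₂.real univ) {f : X → ℝ} {g : Y → ℝ}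
    (hf : Integrable f γ₁) (hg : Integrable g γ₂) {c : ℝ} (h : ∀ x y, f x - g y ≤ c) :
    ∫ x, f x ∂γ₁ - ∫ y, g y ∂γ₂ ≤ c * γ₁.real univ := by
  rcases (measureReal_nonneg (μ := γ₁) (s := univ)).eq_or_lt with hm | hm
  · have h₁ : γ₁ = 0 := Measure.measure_univ_eq_zero.mp ((measureReal_eq_zero_iff).mp hm.symm)
    have h₂ : γ₂ = 0 :=
      Measure.measure_univ_eq_zero.mp ((measureReal_eq_zero_iff).mp (hmass ▸ hm.symm))
    simp [h₁, h₂]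
  have hy : ∀ y, ∫ x, f x ∂γ₁ - c * γ₁.real univ ≤ γ₁.real univ * g y := fun y => by
    have := integral_mono hf (integrable_const (c + g y)) fun x => by linarith [h x y]
    rw [integral_const, smul_eq_mul] at this
    linarith
  have := integral_mono (integrable_const _) (hg.const_mul (γ₁.real univ)) hy
  rw [integral_const, smul_eq_mul, integral_const_mul, ← hmass] at this
  nlinarith

lemma MeasureTheory.Measure.real_bind_apply {E F : Type*} [MeasurableSpace E] [MeasurableSpace F]
    (μ : Measure E) (κ : Kernel E F) [IsFiniteKernel κ] {A : Set F} (hA : MeasurableSet A) :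
    (μ.bind κ).real A = ∫ x, (κ x).real A ∂μ := by
  rw [measureReal_def, Measure.bind_apply hA κ.aemeasurable,
    ← integral_toReal (κ.measurable_coe hA).aemeasurable (ae_of_all _ fun x => measure_lt_top _ _)]
  rfl

section Bind

variable {E F : Type*} [MeasurableSpace E] [MeasurableSpace F]
  (κ₁ κ₂ : Kernel E F) [IsMarkovKernel κ₁] [IsMarkovKernel κ₂]
  (μ ν : Measure E) [IsProbabilityMeasure μ] [IsProbabilityMeasure ν] {c δ : ℝ}

lemma real_bind_sub_real_bind_le (hc : ∀ x y, dTV (κ₁ x) (κ₂ y) ≤ 2 * c)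
    (hδ : ∀ x, dTV (κ₁ x) (κ₂ x) ≤ 2 * δ) {A : Set F} (hA : MeasurableSet A) :
    (μ.bind κ₁).real A - (ν.bind κ₂).real A ≤ c * (dTV μ ν / 2) + δ * (1 - dTV μ ν / 2) := by
  obtain ⟨γ₁, γ₂, η, hμ, hν, hγ₁, hγ₂⟩ := exists_common_part_real_univ_eq_half_dTV μ ν
  have := isFiniteMeasure_of_le _ (hμ ▸ Measure.le_add_right le_rfl : γ₁ ≤ μ)
  have := isFiniteMeasure_of_le _ (hν ▸ Measure.le_add_right le_rfl : γ₂ ≤ ν)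
  have := isFiniteMeasure_of_le _ (hμ ▸ Measure.le_add_left le_rfl : η ≤ μ)
  have hη : η.real univ = 1 - dTV μ ν / 2 := by
    have := probReal_univ (μ := μ)
    rw [hμ, measureReal_add_apply, hγ₁] at this
    linarith
  have hcA : ∀ x y, (κ₁ x).real A - (κ₂ y).real A ≤ c := fun x y =>
    (le_abs_self _).trans <| (abs_real_sub_le_half_dTV _ _ hA).trans (by linarith [hc x y])
  have hδA : ∀ x, (κ₁ x).real A - (κ₂ x).real A ≤ δ := fun x =>
    (le_abs_self _).trans <| (abs_real_sub_le_half_dTV _ _ hA).trans (by linarith [hδ x])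
  have hint₁ := fun ρ [IsFiniteMeasure ρ] => Kernel.IsMarkovKernel.integrable ρ κ₁ hA
  have hint₂ := fun ρ [IsFiniteMeasure ρ] => Kernel.IsMarkovKernel.integrable ρ κ₂ hA
  have hfar : ∫ x, (κ₁ x).real A ∂γ₁ - ∫ y, (κ₂ y).real A ∂γ₂ ≤ c * (dTV μ ν / 2) :=
    hγ₁ ▸ integral_sub_integral_le_of_forall_sub_le (hγ₁.trans hγ₂.symm)
      (hint₁ γ₁) (hint₂ γ₂) hcA
  have hnear : ∫ x, (κ₁ x).real A ∂η - ∫ x, (κ₂ x).real A ∂η ≤ δ * (1 - dTV μ ν / 2) := by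
    rw [← integral_sub (hint₁ η) (hint₂ η), ← hη, mul_comm, ← smul_eq_mul, ← integral_const]
    exact integral_mono ((hint₁ η).sub (hint₂ η)) (integrable_const δ) hδA
  have hsplit₁ : (μ.bind κ₁).real A = ∫ x, (κ₁ x).real A ∂γ₁ + ∫ x, (κ₁ x).real A ∂η := by
    rw [Measure.real_bind_apply _ _ hA, hμ, integral_add_measure (hint₁ γ₁) (hint₁ η)]
  have hsplit₂ : (ν.bind κ₂).real A = ∫ x, (κ₂ x).real A ∂γ₂ + ∫ x, (κ₂ x).real A ∂η := by
    rw [Measure.real_bind_apply _ _ hA, hν, integral_add_measure (hint₂ γ₂) (hint₂ η)]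
  linarith

lemma dTV_bind_le (hc : ∀ x y, dTV (κ₁ x) (κ₂ y) ≤ 2 * c)
    (hδ : ∀ x, dTV (κ₁ x) (κ₂ x) ≤ 2 * δ) :
    dTV (μ.bind κ₁) (ν.bind κ₂) ≤ c * dTV μ ν + δ * (2 - dTV μ ν) := by
  have hc' : ∀ x y, dTV (κ₂ x) (κ₁ y) ≤ 2 * c := fun x y => dTV_comm (κ₁ y) _ ▸ hc y x
  have hδ' : ∀ x, dTV (κ₂ x) (κ₁ x) ≤ 2 * δ := fun x => dTV_comm (κ₁ x) _ ▸ hδ x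
  have := dTV_le_of_forall_abs_real_sub_le fun A hA => abs_sub_le_iff.mpr
    ⟨real_bind_sub_real_bind_le κ₁ κ₂ μ ν hc hδ hA,
      dTV_comm μ ν ▸ real_bind_sub_real_bind_le κ₂ κ₁ ν μ hc' hδ' hA⟩
  linarith

end Bind

theorem stmt3_general {E : Type*} [MeasurableSpace E]
    (P : Measure E → Kernel E E) (hMarkov : ∀ μ, IsMarkovKernel (P μ))
    (α lam : ℝ)
    (hDobr : ∀ μ ν : Measure E, IsProbabilityMeasure μ → IsProbabilityMeasure ν →
      ∀ x y : E, dTV ((P μ) x) ((P ν) y) ≤ 2 * (1 - α))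
    (hLip : ∀ μ ν : Measure E, IsProbabilityMeasure μ → IsProbabilityMeasure ν →
      ∀ x : E, dTV ((P μ) x) ((P ν) x) ≤ lam * dTV μ ν)
    (μ ν : Measure E) (hμ : IsProbabilityMeasure μ) (hν : IsProbabilityMeasure ν) :
    dTV (μ.bind ⇑(P μ)) (ν.bind ⇑(P ν))
      ≤ (1 - α + lam) * dTV μ ν - lam / 2 * (dTV μ ν) ^ 2 := by
  have := hMarkov μ
  have := hMarkov ν
  have := dTV_bind_le (P μ) (P ν) μ ν (c := 1 - α) (δ := lam * dTV μ ν / 2)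
    (hDobr μ ν hμ hν) fun x => by linarith [hLip μ ν hμ hν x]
  linarith

/-- The one-step contraction inequality: under the global nonlinear Dobrushin condition
with constant `α ∈ (0,1]` and the measure-Lipschitz condition with constant `lam ≥ 0`,
`d_TV(P_μ μ, P_ν ν) ≤ (1 − α + lam) d_TV(μ,ν) − (lam/2) d_TV(μ,ν)²`. -/
theorem stmt3 {E : Type*} [MeasurableSpace E]
    (P : Measure E → Kernel E E) (hMarkov : ∀ μ, IsMarkovKernel (P μ))
    (α lam : ℝ) (hα0 : 0 < α) (hα1 : α ≤ 1) (hlam0 : 0 ≤ lam)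
    (hDobr : ∀ μ ν : Measure E, IsProbabilityMeasure μ → IsProbabilityMeasure ν →
      ∀ x y : E, dTV ((P μ) x) ((P ν) y) ≤ 2 * (1 - α))
    (hLip : ∀ μ ν : Measure E, IsProbabilityMeasure μ → IsProbabilityMeasure ν →
      ∀ x : E, dTV ((P μ) x) ((P ν) x) ≤ lam * dTV μ ν)
    (μ ν : Measure E) (hμ : IsProbabilityMeasure μ) (hν : IsProbabilityMeasure ν) :
    dTV (μ.bind ⇑(P μ)) (ν.bind ⇑(P ν))
      ≤ (1 - α + lam) * dTV μ ν - lam / 2 * (dTV μ ν) ^ 2 :=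
  stmt3_general P hMarkov α lam hDobr hLip μ ν hμ hν
end

section
/- Let Q and R be Markov transition kernels on a measurable space (E,ℰ) and let μ, ν be probability measures on E. Then d_TV(Qμ, Rν) ≤ (2 − d_TV(μ,ν)) · sup_{x∈E} d_TV(Q δ_x, R δ_x) + d_TV(μ,ν). -/
/-!
Take a Hahn set `s` for `μ - ν` and put `t = μ(s) - ν(s) ≤ d_TV(μ,ν)/2`. For a measurable `A`, the
functions `f = Q(·,A)` and `g = R(·,A)` take values in `[0,1]` and differ by at most
`c = sup_x d_TV(Qδ_x, Rδ_x)/2`. On `s` the excess mass of `μ` over `ν` contributes at most `t` to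
`∫ f dμ - ∫ g dν` and the rest at most `c ν(s)`; on `sᶜ` the contribution is at most `c μ(sᶜ)`.
Since `ν(s) + μ(sᶜ) = 1 - t`, this gives `|Qμ(A) - Rν(A)| ≤ t + c (1 - t)`, which is nondecreasing
in `t` because `c ≤ 1`. Hence `d_TV(Qμ, Rν) ≤ d + (1 - d/2) · sup_x d_TV(Qδ_x, Rδ_x)` with
`d = d_TV(μ,ν)`.
-/

open MeasureTheory ProbabilityTheory

open Set

section TotalVariation

variable {E : Type*} [MeasurableSpace E]

lemma dTV_nonneg (μ ν : Measure E) : 0 ≤ dTV μ ν :=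
  mul_nonneg zero_le_two (Real.iSup_nonneg fun _ => abs_nonneg _)

lemma dTV_le_of_forall_abs_sub_le {μ ν : Measure E} {c : ℝ} (hc : 0 ≤ c)
    (h : ∀ A, MeasurableSet A → |μ.real A - ν.real A| ≤ c) : dTV μ ν ≤ 2 * c :=
  mul_le_mul_of_nonneg_left (Real.iSup_le (fun A => h A.1 A.2) hc) zero_le_two

lemma abs_measureReal_sub_le_one (μ ν : Measure E) [IsProbabilityMeasure μ]
    [IsProbabilityMeasure ν] (A : Set E) : |μ.real A - ν.real A| ≤ 1 :=
  abs_sub_le_of_nonneg_of_le measureReal_nonneg measureReal_le_one measureReal_nonneg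
    measureReal_le_one

lemma dTV_le_two (μ ν : Measure E) [IsProbabilityMeasure μ] [IsProbabilityMeasure ν] :
    dTV μ ν ≤ 2 := by
  simpa using dTV_le_of_forall_abs_sub_le zero_le_one fun A _ => abs_measureReal_sub_le_one μ ν A

lemma two_mul_abs_measureReal_sub_le_dTV (μ ν : Measure E) [IsProbabilityMeasure μ]
    [IsProbabilityMeasure ν] {A : Set E} (hA : MeasurableSet A) :
    2 * |μ.real A - ν.real A| ≤ dTV μ ν := by
  refine mul_le_mul_of_nonneg_left (le_ciSup (f := fun B : {B : Set E // MeasurableSet B} =>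
    |μ.real B.1 - ν.real B.1|) ?_ ⟨A, hA⟩) zero_le_two
  exact ⟨1, by rintro _ ⟨B, rfl⟩; exact abs_measureReal_sub_le_one μ ν B⟩

end TotalVariation

section Integral

variable {E : Type*} [MeasurableSpace E]

lemma integral_sub_integral_le_of_le {α β : Measure E} [IsFiniteMeasure β] (hαβ : α ≤ β)
    {h : E → ℝ} (hi : Integrable h β) (h1 : ∀ x, h x ≤ 1) :
    ∫ x, h x ∂β - ∫ x, h x ∂α ≤ β.real univ - α.real univ := by
  have : IsFiniteMeasure α := isFiniteMeasure_of_le β hαβ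
  have key := integral_mono_measure hαβ (ae_of_all _ fun x => sub_nonneg.2 (h1 x))
    ((integrable_const 1).sub hi)
  rw [integral_sub (integrable_const 1) (hi.mono_measure hαβ),
    integral_sub (integrable_const 1) hi, integral_const, integral_const] at key
  simp only [smul_eq_mul, mul_one] at key
  linarith

lemma integrable_of_mem_Icc (μ : Measure E) [IsFiniteMeasure μ] {f : E → ℝ} (hf : Measurable f)
    (hf01 : ∀ x, f x ∈ Icc 0 1) : Integrable f μ :=
  .of_bound hf.aestronglyMeasurable 1 <| ae_of_all _ fun x => by
    rw [Real.norm_eq_abs, abs_le]; exact ⟨by linarith [(hf01 x).1], (hf01 x).2⟩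

variable {μ ν : Measure E} [IsProbabilityMeasure μ] [IsProbabilityMeasure ν]
  {f g : E → ℝ} {c : ℝ}

lemma integral_sub_integral_le_of_isHahnDecomposition {s : Set E}
    (hs : IsHahnDecomposition ν μ s) (hf : Measurable f) (hg : Measurable g)
    (hf01 : ∀ x, f x ∈ Icc 0 1) (hg01 : ∀ x, g x ∈ Icc 0 1) (hfg : ∀ x, f x - g x ≤ c) :
    ∫ x, f x ∂μ - ∫ x, g x ∂ν
      ≤ (μ.real s - ν.real s) + c * (1 - (μ.real s - ν.real s)) := by
  have hm := hs.measurableSet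
  have hfμ := integrable_of_mem_Icc μ hf hf01
  have hgν := integrable_of_mem_Icc ν hg hg01
  have on_s : ∫ x in s, f x ∂μ - ∫ x in s, f x ∂ν ≤ μ.real s - ν.real s := by
    simpa using integral_sub_integral_le_of_le hs.le_on hfμ.restrict fun x => (hf01 x).2
  have on_compl : ∫ x in sᶜ, g x ∂μ ≤ ∫ x in sᶜ, g x ∂ν :=
    integral_mono_measure hs.ge_on_compl (ae_of_all _ fun x => (hg01 x).1) hgν.restrict
  have diff_on (ρ : Measure E) [IsFiniteMeasure ρ] (t : Set E) :
      ∫ x in t, f x ∂ρ - ∫ x in t, g x ∂ρ ≤ c * ρ.real t := by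
    have hfρ := integrable_of_mem_Icc ρ hf hf01
    have hgρ := integrable_of_mem_Icc ρ hg hg01
    rw [← integral_sub hfρ.restrict hgρ.restrict, mul_comm, ← smul_eq_mul, ← setIntegral_const]
    exact setIntegral_mono (hfρ.sub hgρ).integrableOn (integrable_const c) hfg
  have on_compl_diff := diff_on μ sᶜ
  rw [probReal_compl_eq_one_sub hm] at on_compl_diff
  rw [← integral_add_compl hm hfμ, ← integral_add_compl hm hgν]
  linarith [diff_on ν s]

lemma abs_integral_sub_integral_le (hf : Measurable f) (hg : Measurable g)
    (hf01 : ∀ x, f x ∈ Icc 0 1) (hg01 : ∀ x, g x ∈ Icc 0 1) (hc : c ≤ 1)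
    (hfg : ∀ x, |f x - g x| ≤ c) :
    |∫ x, f x ∂μ - ∫ x, g x ∂ν| ≤ dTV μ ν / 2 + c * (1 - dTV μ ν / 2) := by
  obtain ⟨s, hs⟩ := exists_isHahnDecomposition ν μ
  have ht : μ.real s - ν.real s ≤ dTV μ ν / 2 := by
    linarith [le_abs_self (μ.real s - ν.real s),
      two_mul_abs_measureReal_sub_le_dTV μ ν hs.measurableSet]
  have hcompl : ν.real sᶜ - μ.real sᶜ = μ.real s - ν.real s := by
    rw [probReal_compl_eq_one_sub hs.measurableSet, probReal_compl_eq_one_sub hs.measurableSet]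
    ring
  have upper := integral_sub_integral_le_of_isHahnDecomposition (c := c) hs hf hg hf01 hg01
    fun x => (abs_le.1 (hfg x)).2
  have lower := integral_sub_integral_le_of_isHahnDecomposition (c := c) hs.compl hg hf hg01 hf01
    fun x => by linarith [(abs_le.1 (hfg x)).1]
  rw [hcompl] at lower
  have mono : μ.real s - ν.real s + c * (1 - (μ.real s - ν.real s))
      ≤ dTV μ ν / 2 + c * (1 - dTV μ ν / 2) := by nlinarith
  rw [abs_le]
  constructor <;> linarith

end Integral

section Kernel

variable {E F : Type*} [MeasurableSpace E] [MeasurableSpace F]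

lemma measureReal_bind_eq_integral (μ : Measure E) (κ : Kernel E F) [IsFiniteKernel κ]
    {A : Set F} (hA : MeasurableSet A) : (μ.bind κ).real A = ∫ x, (κ x).real A ∂μ := by
  rw [measureReal_def, Measure.bind_apply hA κ.aemeasurable,
    ← integral_toReal (κ.measurable_coe hA).aemeasurable (ae_of_all _ fun _ => measure_lt_top _ _)]
  rfl

lemma abs_measureReal_sub_le_iSup_dTV (Q R : Kernel E F) [IsMarkovKernel Q] [IsMarkovKernel R]
    (x : E) {A : Set F} (hA : MeasurableSet A) :
    |(Q x).real A - (R x).real A| ≤ (⨆ y, dTV (Q y) (R y)) / 2 := by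
  have hbdd : BddAbove (range fun y => dTV (Q y) (R y)) :=
    ⟨2, by rintro _ ⟨y, rfl⟩; exact dTV_le_two _ _⟩
  linarith [two_mul_abs_measureReal_sub_le_dTV (Q x) (R x) hA, le_ciSup hbdd x]

lemma iSup_dTV_nonneg (Q R : Kernel E F) : 0 ≤ ⨆ x, dTV (Q x) (R x) :=
  Real.iSup_nonneg fun x => dTV_nonneg (Q x) (R x)

lemma dTV_bind_le_s19 (Q R : Kernel E F) [IsMarkovKernel Q] [IsMarkovKernel R]
    (μ ν : Measure E) [IsProbabilityMeasure μ] [IsProbabilityMeasure ν] :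
    dTV (μ.bind Q) (ν.bind R) ≤ dTV μ ν + (1 - dTV μ ν / 2) * ⨆ x, dTV (Q x) (R x) := by
  set S := ⨆ x, dTV (Q x) (R x)
  have hS : S ≤ 2 := Real.iSup_le (fun x => dTV_le_two _ _) zero_le_two
  have hd := dTV_le_two μ ν
  calc dTV (μ.bind Q) (ν.bind R) ≤ 2 * (dTV μ ν / 2 + S / 2 * (1 - dTV μ ν / 2)) := by
        refine dTV_le_of_forall_abs_sub_le (by nlinarith [dTV_nonneg μ ν, iSup_dTV_nonneg Q R])
          fun A hA => ?_
        have hmem (K : Kernel E F) [IsMarkovKernel K] (x : E) : (K x).real A ∈ Icc 0 1 :=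
          ⟨measureReal_nonneg, measureReal_le_one⟩
        rw [measureReal_bind_eq_integral μ Q hA, measureReal_bind_eq_integral ν R hA]
        exact abs_integral_sub_integral_le (Q.measurable_coe hA).ennreal_toReal
          (R.measurable_coe hA).ennreal_toReal (hmem Q) (hmem R) (by linarith)
          fun x => abs_measureReal_sub_le_iSup_dTV Q R x hA
    _ = dTV μ ν + (1 - dTV μ ν / 2) * S := by ring

end Kernel

/-- For Markov kernels `Q`, `R` and probability measures `μ`, `ν`:
`d_TV(Qμ, Rν) ≤ (2 − d_TV(μ,ν)) · sup_x d_TV(Qδ_x, Rδ_x) + d_TV(μ,ν)`. -/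
theorem stmt19 {E : Type*} [MeasurableSpace E]
    (Q R : Kernel E E) (hQ : IsMarkovKernel Q) (hR : IsMarkovKernel R)
    (μ ν : Measure E) (hμ : IsProbabilityMeasure μ) (hν : IsProbabilityMeasure ν) :
    dTV (μ.bind ⇑Q) (ν.bind ⇑R)
      ≤ (2 - dTV μ ν) * (⨆ x : E, dTV (Q x) (R x)) + dTV μ ν := by
  have hd := dTV_le_two μ ν
  nlinarith [dTV_bind_le_s19 Q R μ ν, iSup_dTV_nonneg Q R]
end
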